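/- arXiv:1803.11553 — 2 statements merged into one kernel-verified Lean document; each statement's English description precedes it below -/
import Mathlib

section
/- For every b, d, ε > 0 there exist k, c > 0 such that the following holds for all sufficiently large n. Let 𝒢 be a regular (b,d)-expander on n vertices, and let E(𝒢) = E_B ∪ E_R be a partition of its edges into BLUE and RED edges such that every k-thick subset S of V(𝒢) with εn ≤ |S| ≤ n/2 has at least (b/2)·|S| RED edges joining S to its complement. Let 𝒮 be a family of pairwise disjoint connected vertex subsets of 𝒢, each of size at least k, and let H ∼ 𝒢_ε be sampled independently of everything else. Then with probability at least 1 − exp(−c n), for every two sub-collections 𝒮₁, 𝒮₂ ⊆ 𝒮 each having at least εn vertices in its union, there is a path consisting only of RED edges of H connecting a vertex of the union of 𝒮₁ to a vertex of the union of 𝒮₂. -/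
open scoped Classical symmDiff

noncomputable section

namespace Percolation

variable {V : Type} [Fintype V] [DecidableEq V]

/-- The edge set of `G` as a finset. -/
noncomputable def edgeFinset' (G : SimpleGraph V) : Finset (Sym2 V) :=
  Finset.univ.filter (· ∈ G.edgeSet)

/-- Probability that bond percolation on `G` with parameter `p` produces a spanning
subgraph satisfying `P`. -/
noncomputable def percProb (G : SimpleGraph V) (p : ℝ) (P : SimpleGraph V → Prop) : ℝ :=
  ∑ s ∈ (edgeFinset' G).powerset,
    (p ^ s.card * (1 - p) ^ ((edgeFinset' G).card - s.card)) *
      (if P (SimpleGraph.fromEdgeSet (↑s)) then 1 else 0)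

/-- Joint probability for two independent bond percolations on `G`. -/
noncomputable def percProb2 (G : SimpleGraph V) (p₁ p₂ : ℝ)
    (P : SimpleGraph V → SimpleGraph V → Prop) : ℝ :=
  ∑ s ∈ (edgeFinset' G).powerset, ∑ t ∈ (edgeFinset' G).powerset,
    (p₁ ^ s.card * (1 - p₁) ^ ((edgeFinset' G).card - s.card)) *
    (p₂ ^ t.card * (1 - p₂) ^ ((edgeFinset' G).card - t.card)) *
      (if P (SimpleGraph.fromEdgeSet (↑s)) (SimpleGraph.fromEdgeSet (↑t)) then 1 else 0)

/-- Number of edges of `G` joining `S` to its complement. -/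
noncomputable def cutCard (G : SimpleGraph V) (S : Finset V) : ℕ :=
  ((edgeFinset' G).filter (fun e => ∃ x ∈ S, ∃ y, y ∉ S ∧ e = s(x, y))).card

/-- `G` is a `(b,d)`-expander: max degree at most `d`, and every vertex set of size at most
`n/2` has at least `b|S|` edges to its complement. -/
def IsExpander (G : SimpleGraph V) (b : ℝ) (d : ℕ) : Prop :=
  (∀ v, (G.neighborSet v).ncard ≤ d) ∧
  ∀ S : Finset V, (S.card : ℝ) ≤ Fintype.card V / 2 → b * S.card ≤ cutCard G S

/-- `G` is a regular `(b,d)`-expander. -/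
def IsRegularExpander (G : SimpleGraph V) (b : ℝ) (d : ℕ) : Prop :=
  IsExpander G b d ∧ ∀ v, (G.neighborSet v).ncard = d

/-- The vertices of the connected component `c` of `G`. -/
noncomputable def compVerts (G : SimpleGraph V) (c : G.ConnectedComponent) : Finset V :=
  Finset.univ.filter (fun v => G.connectedComponentMk v = c)

/-- The edges of the connected component `c` of `G`. -/
noncomputable def compEdges (G : SimpleGraph V) (c : G.ConnectedComponent) : Finset (Sym2 V) :=
  (edgeFinset' G).filter (fun e => ∀ v ∈ e, G.connectedComponentMk v = c)

/-- `c` is a largest connected component of `G`. -/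
def IsLargestComp (G : SimpleGraph V) (c : G.ConnectedComponent) : Prop :=
  ∀ c' : G.ConnectedComponent, (compVerts G c').card ≤ (compVerts G c).card

/-- The 2-core of the connected component `c` of `G` : the maximal subgraph of `G`
supported inside `c` all of whose vertices have degree at least 2. -/
noncomputable def twoCoreComp (G : SimpleGraph V) (c : G.ConnectedComponent) : SimpleGraph V :=
  sSup {H : SimpleGraph V | H ≤ G ∧ (∀ v ∈ H.support, G.connectedComponentMk v = c) ∧
    ∀ v ∈ H.support, 2 ≤ (H.neighborSet v).ncard}

/-- The event `A^R_{x,y}(H)`: the connected component of `y` in `H` with the edge `xy`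
removed (if present) has at least `R` vertices. -/
def eventA (H : SimpleGraph V) (R : ℕ) (x y : V) : Prop :=
  R ≤ (compVerts (H.deleteEdges {s(x, y)})
        ((H.deleteEdges {s(x, y)}).connectedComponentMk y)).card

/-- `E₁(H)`: edges `xy` of `H` such that `A^R_{x,y}` or `A^R_{y,x}` holds. -/
noncomputable def E1set (H : SimpleGraph V) (R : ℕ) : Finset (Sym2 V) :=
  (edgeFinset' H).filter (fun e => ∃ x y, e = s(x, y) ∧ (eventA H R x y ∨ eventA H R y x))

/-- `V₁(H)`: vertices `x` such that for some `y`, `xy ∈ E(H)` and `A^R_{x,y}` holds. -/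
noncomputable def V1set (H : SimpleGraph V) (R : ℕ) : Finset V :=
  Finset.univ.filter (fun x => ∃ y, H.Adj x y ∧ eventA H R x y)

/-- `E₂(H)`: edges `xy` of `H` such that both `A^R_{x,y}` and `A^R_{y,x}` hold. -/
noncomputable def E2set (H : SimpleGraph V) (R : ℕ) : Finset (Sym2 V) :=
  (edgeFinset' H).filter (fun e => ∃ x y, e = s(x, y) ∧ eventA H R x y ∧ eventA H R y x)

/-- `V₂(H)`: vertices incident to an edge of `E₂(H)`. -/
noncomputable def V2set (H : SimpleGraph V) (R : ℕ) : Finset V :=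
  Finset.univ.filter (fun x => ∃ e ∈ E2set H R, x ∈ e)

/-- `V̄₁(H)`: vertices `y` such that `A^R_{x,y}(H)` holds for some `x`. -/
noncomputable def Vbar1 (H : SimpleGraph V) (R : ℕ) : Finset V :=
  Finset.univ.filter (fun y => ∃ x, eventA H R x y)

/-- `S` is `k`-thick in `H`: a union of pairwise disjoint subsets, each of size at least
`k`, each inducing a connected subgraph of `H`. -/
def IsThick (H : SimpleGraph V) (k : ℕ) (S : Finset V) : Prop :=
  ∃ P : Finset (Finset V),
    (∀ T ∈ P, k ≤ T.card ∧ (H.induce (↑T : Set V)).Connected) ∧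
    (↑P : Set (Finset V)).PairwiseDisjoint id ∧ S = P.biUnion id

/-- `S` is a separator of `K`. -/
def IsSeparator {W : Type} [Fintype W] (K : SimpleGraph W) (S : Finset W) : Prop :=
  ∃ A B : Finset W, Disjoint A B ∧ Disjoint A S ∧ Disjoint B S ∧
    (∀ w, w ∈ A ∨ w ∈ B ∨ w ∈ S) ∧
    (∀ a ∈ A, ∀ b ∈ B, ¬ K.Adj a b) ∧
    3 * A.card ≤ 2 * Fintype.card W ∧ 3 * B.card ≤ 2 * Fintype.card W


section Aux

set_option linter.unusedSectionVars false
set_option linter.deprecated false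
set_option maxHeartbeats 1000000

variable {α : Type*} [DecidableEq α]

def pw (p : ℝ) (E s : Finset α) : ℝ := p ^ s.card * (1 - p) ^ (E.card - s.card)

lemma sum_pw (p : ℝ) (E : Finset α) : ∑ s ∈ E.powerset, pw p E s = 1 := by
  have h := Finset.prod_add (fun _ : α => p) (fun _ : α => 1 - p) E
  have h2 : ∑ s ∈ E.powerset, pw p E s
      = ∑ t ∈ E.powerset, (∏ _i ∈ t, p) * ∏ _i ∈ E \ t, (1 - p) := by
    apply Finset.sum_congr rfl
    intro t ht
    rw [Finset.mem_powerset] at ht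
    simp [pw, Finset.card_sdiff_of_subset ht]
  rw [h2, ← h]
  simp

lemma pw_nonneg {p : ℝ} (h0 : 0 ≤ p) (h1 : p ≤ 1) (E s : Finset α) : 0 ≤ pw p E s := by
  apply mul_nonneg (pow_nonneg h0 _) (pow_nonneg (by linarith) _)

lemma pw_mul (p : ℝ) {E A s : Finset α} (hA : A ⊆ E) (hs : s ⊆ E) :
    pw p E s = pw p A (s ∩ A) * pw p (E \ A) (s ∩ (E \ A)) := by
  have hd : Disjoint (s ∩ A) (s ∩ (E \ A)) := by
    apply Finset.disjoint_left.2
    intro x hx hx'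
    simp only [Finset.mem_inter, Finset.mem_sdiff] at hx hx'
    exact hx'.2.2 hx.2
  have hu : (s ∩ A) ∪ (s ∩ (E \ A)) = s := by
    rw [← Finset.inter_union_distrib_left, Finset.union_sdiff_of_subset hA,
      Finset.inter_eq_left.2 hs]
  have hcard : (s ∩ A).card + (s ∩ (E \ A)).card = s.card := by
    rw [← Finset.card_union_of_disjoint hd, hu]
  have h1 : (s ∩ A).card ≤ A.card := Finset.card_le_card Finset.inter_subset_right
  have h2 : (s ∩ (E \ A)).card ≤ (E \ A).card := Finset.card_le_card Finset.inter_subset_right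
  have hE : A.card + (E \ A).card = E.card := by
    rw [← Finset.card_union_of_disjoint Finset.disjoint_sdiff,
      Finset.union_sdiff_of_subset hA]
  have e1 : E.card - s.card = (A.card - (s ∩ A).card) + ((E \ A).card - (s ∩ (E \ A)).card) := by
    omega
  rw [pw, pw, pw, e1, ← hcard, pow_add, pow_add]
  ring

lemma sum_pw_factor (p : ℝ) (E A : Finset α) (hA : A ⊆ E) (g h : Finset α → ℝ) :
    ∑ s ∈ E.powerset, pw p E s * (g (s ∩ A) * h (s ∩ (E \ A)))
    = (∑ a ∈ A.powerset, pw p A a * g a) * (∑ b ∈ (E \ A).powerset, pw p (E \ A) b * h b) := by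
  rw [Finset.sum_mul_sum]
  rw [← Finset.sum_product']
  apply Finset.sum_nbij' (fun s => (s ∩ A, s ∩ (E \ A))) (fun q => q.1 ∪ q.2)
  · intro s hs
    rw [Finset.mem_powerset] at hs
    simp only [Finset.mem_product, Finset.mem_powerset]
    exact ⟨Finset.inter_subset_right, Finset.inter_subset_right⟩
  · intro q hq
    simp only [Finset.mem_product, Finset.mem_powerset] at hq
    rw [Finset.mem_powerset]
    exact Finset.union_subset (hq.1.trans hA) (hq.2.trans (Finset.sdiff_subset))
  · intro s hs
    rw [Finset.mem_powerset] at hs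
    rw [← Finset.inter_union_distrib_left, Finset.union_sdiff_of_subset hA,
      Finset.inter_eq_left.2 hs]
  · intro q hq
    simp only [Finset.mem_product, Finset.mem_powerset] at hq
    have e1 : q.2 ∩ A = ∅ := by
      apply Finset.eq_empty_iff_forall_notMem.2
      intro x hx
      simp only [Finset.mem_inter] at hx
      exact (Finset.mem_sdiff.1 (hq.2 hx.1)).2 hx.2
    have e2 : q.1 ∩ (E \ A) = ∅ := by
      apply Finset.eq_empty_iff_forall_notMem.2
      intro x hx
      simp only [Finset.mem_inter, Finset.mem_sdiff] at hx
      exact hx.2.2 (hq.1 hx.1)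
    have h1 : (q.1 ∪ q.2) ∩ A = q.1 := by
      rw [Finset.union_inter_distrib_right, Finset.inter_eq_left.2 hq.1, e1, Finset.union_empty]
    have h2 : (q.1 ∪ q.2) ∩ (E \ A) = q.2 := by
      rw [Finset.union_inter_distrib_right, Finset.inter_eq_left.2 hq.2, e2, Finset.empty_union]
    rw [h1, h2]
  · intro s hs
    rw [Finset.mem_powerset] at hs
    rw [pw_mul p hA hs]
    ring

lemma sum_pw_prod (p : ℝ) (g : Finset α → Finset α → ℝ) :
    ∀ (l : List (Finset α)) (E : Finset α), l.Pairwise Disjoint → (∀ A ∈ l, A ⊆ E) →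
    ∑ s ∈ E.powerset, pw p E s * (l.map (fun A => g A (s ∩ A))).prod
    = (l.map (fun A => ∑ a ∈ A.powerset, pw p A a * g A a)).prod := by
  intro l
  induction l with
  | nil => intro E _ _; simpa using sum_pw p E
  | cons A l ih =>
    intro E hp hsub
    have hA : A ⊆ E := hsub A List.mem_cons_self
    have hsub' : ∀ B ∈ l, B ⊆ E \ A := by
      intro B hB
      have hd : Disjoint A B := (List.pairwise_cons.1 hp).1 B hB
      intro x hx
      rw [Finset.mem_sdiff]
      exact ⟨hsub B (List.mem_cons_of_mem A hB) hx, Finset.disjoint_right.1 hd hx⟩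
    have key : ∀ s : Finset α, s ⊆ E →
        (l.map (fun B => g B (s ∩ B))).prod = (l.map (fun B => g B ((s ∩ (E \ A)) ∩ B))).prod := by
      intro s hs
      congr 1
      apply List.map_congr_left
      intro B hB
      congr 1
      rw [Finset.inter_assoc, Finset.inter_eq_right.2 (hsub' B hB)]
    rw [List.map_cons, List.prod_cons]
    calc ∑ s ∈ E.powerset, pw p E s * (g A (s ∩ A) * (l.map (fun B => g B (s ∩ B))).prod)
        = ∑ s ∈ E.powerset, pw p E s *
            (g A (s ∩ A) * (l.map (fun B => g B ((s ∩ (E \ A)) ∩ B))).prod) := by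
          apply Finset.sum_congr rfl
          intro s hs
          rw [key s (Finset.mem_powerset.1 hs)]
      _ = (∑ a ∈ A.powerset, pw p A a * g A a) *
            (∑ b ∈ (E \ A).powerset, pw p (E \ A) b * (l.map (fun B => g B (b ∩ B))).prod) :=
          sum_pw_factor p E A hA (g A) (fun b => (l.map (fun B => g B (b ∩ B))).prod)
      _ = _ := by
          rw [ih (E \ A) (List.pairwise_cons.1 hp).2 hsub']

lemma sum_pw_indicator (p : ℝ) (F : Finset α) :
    ∑ a ∈ F.powerset, pw p F a * (if F ⊆ a then 0 else 1) = 1 - p ^ F.card := by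
  have h : ∀ a ∈ F.powerset, pw p F a * (if F ⊆ a then 0 else 1)
      = pw p F a - (if a = F then p ^ F.card else 0) := by
    intro a ha
    rw [Finset.mem_powerset] at ha
    by_cases h : F ⊆ a
    · have : a = F := Finset.Subset.antisymm ha h
      subst this
      simp [pw]
    · have : a ≠ F := by rintro rfl; exact h (le_refl a)
      simp [h, this]
  rw [Finset.sum_congr rfl h, Finset.sum_sub_distrib, sum_pw,
    Finset.sum_ite_eq' _ _ (fun _ => p ^ F.card)]
  simp

lemma percProb_ge (G : SimpleGraph V) (p : ℝ) (hp0 : 0 ≤ p) (hp1 : p ≤ 1)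
    (P : SimpleGraph V → Prop) {ι : Type*} (I : Finset ι) (Fs : ι → List (Finset (Sym2 V)))
    (hdisj : ∀ i ∈ I, (Fs i).Pairwise Disjoint)
    (hsub : ∀ i ∈ I, ∀ A ∈ Fs i, A ⊆ edgeFinset' G)
    (hcover : ∀ s : Finset (Sym2 V), s ⊆ edgeFinset' G →
      ¬ P (SimpleGraph.fromEdgeSet ↑s) → ∃ i ∈ I, ∀ A ∈ Fs i, ¬ A ⊆ s) :
    1 - ∑ i ∈ I, ((Fs i).map (fun A => 1 - p ^ A.card)).prod ≤ percProb G p P := by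
  set E := edgeFinset' G with hE
  have hper : percProb G p P
      = ∑ s ∈ E.powerset, pw p E s * (if P (SimpleGraph.fromEdgeSet (↑s)) then 1 else 0) := rfl
  have key : ∀ i ∈ I, ∑ s ∈ E.powerset,
      pw p E s * ((Fs i).map (fun A => if A ⊆ s then (0:ℝ) else 1)).prod
      = ((Fs i).map (fun A => 1 - p ^ A.card)).prod := by
    intro i hi
    have h1 : ∀ s ∈ E.powerset,
        pw p E s * ((Fs i).map (fun A => if A ⊆ s then (0:ℝ) else 1)).prod
        = pw p E s * ((Fs i).map (fun A => (fun A a => if A ⊆ a then (0:ℝ) else 1) A (s ∩ A))).prod := by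
      intro s _
      congr 1
      congr 1
      apply List.map_congr_left
      intro A _
      have : A ⊆ s ∩ A ↔ A ⊆ s := by
        rw [Finset.subset_inter_iff]
        simp
      simp only [this]
    rw [Finset.sum_congr rfl h1,
      sum_pw_prod p (fun A a => if A ⊆ a then (0:ℝ) else 1) (Fs i) E (hdisj i hi) (hsub i hi)]
    congr 1
    apply List.map_congr_left
    intro A _
    exact sum_pw_indicator p A
  have hpoint : ∀ s ∈ E.powerset,
      pw p E s * (1 - (if P (SimpleGraph.fromEdgeSet (↑s)) then (1:ℝ) else 0))
      ≤ pw p E s * ∑ i ∈ I, ((Fs i).map (fun A => if A ⊆ s then (0:ℝ) else 1)).prod := by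
    intro s hs
    apply mul_le_mul_of_nonneg_left _ (pw_nonneg hp0 hp1 E s)
    have hnn : ∀ i ∈ I, (0:ℝ) ≤ ((Fs i).map (fun A => if A ⊆ s then (0:ℝ) else 1)).prod := by
      intro i _
      apply List.prod_nonneg
      intro x hx
      simp only [List.mem_map] at hx
      obtain ⟨A, _, rfl⟩ := hx
      split <;> norm_num
    by_cases hP : P (SimpleGraph.fromEdgeSet (↑s))
    · simp only [hP, if_true]
      simpa using Finset.sum_nonneg hnn
    · obtain ⟨i, hi, hAi⟩ := hcover s (Finset.mem_powerset.1 hs) hP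
      have h1 : ((Fs i).map (fun A => if A ⊆ s then (0:ℝ) else 1)).prod = 1 := by
        apply List.prod_eq_one
        intro x hx
        simp only [List.mem_map] at hx
        obtain ⟨A, hA, rfl⟩ := hx
        simp [hAi A hA]
      calc (1:ℝ) - (if P (SimpleGraph.fromEdgeSet (↑s)) then (1:ℝ) else 0) ≤ 1 := by
            split <;> norm_num
        _ = ((Fs i).map (fun A => if A ⊆ s then (0:ℝ) else 1)).prod := h1.symm
        _ ≤ _ := Finset.single_le_sum hnn hi
  have main : 1 - percProb G p P ≤ ∑ i ∈ I, ((Fs i).map (fun A => 1 - p ^ A.card)).prod := by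
    have e1 : ∑ s ∈ E.powerset,
        pw p E s * (1 - (if P (SimpleGraph.fromEdgeSet (↑s)) then (1:ℝ) else 0))
        = 1 - percProb G p P := by
      rw [hper]
      calc ∑ s ∈ E.powerset, pw p E s * (1 - (if P (SimpleGraph.fromEdgeSet (↑s)) then (1:ℝ) else 0))
          = ∑ s ∈ E.powerset, (pw p E s
              - pw p E s * (if P (SimpleGraph.fromEdgeSet (↑s)) then (1:ℝ) else 0)) := by
            apply Finset.sum_congr rfl; intros; ring
        _ = _ := by rw [Finset.sum_sub_distrib, sum_pw]
    rw [← e1]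
    calc ∑ s ∈ E.powerset, pw p E s * (1 - (if P (SimpleGraph.fromEdgeSet (↑s)) then (1:ℝ) else 0))
        ≤ ∑ s ∈ E.powerset, pw p E s
            * ∑ i ∈ I, ((Fs i).map (fun A => if A ⊆ s then (0:ℝ) else 1)).prod :=
          Finset.sum_le_sum hpoint
      _ = ∑ i ∈ I, ∑ s ∈ E.powerset,
            pw p E s * ((Fs i).map (fun A => if A ⊆ s then (0:ℝ) else 1)).prod := by
          rw [Finset.sum_comm]
          apply Finset.sum_congr rfl
          intros s _
          rw [Finset.mul_sum]
      _ = _ := Finset.sum_congr rfl key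
  linarith

def homOfLE' (G : SimpleGraph V) {s t : Set V} (h : s ⊆ t) : G.induce s →g G.induce t :=
  ⟨fun v => ⟨v.1, h v.2⟩, by
    intro a b hab
    simp only [SimpleGraph.comap_adj, Function.Embedding.coe_subtype] at hab ⊢
    exact hab⟩

lemma reachable_induce_mono (G : SimpleGraph V) {s t : Set V} (h : s ⊆ t) {a b : V}
    (ha : a ∈ s) (hb : b ∈ s) (hr : (G.induce s).Reachable ⟨a, ha⟩ ⟨b, hb⟩) :
    (G.induce t).Reachable ⟨a, h ha⟩ ⟨b, h hb⟩ :=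
  hr.map (homOfLE' G h)

lemma connected_attach (G : SimpleGraph V) (T A : Finset V)
    (hT : (G.induce (↑T : Set V)).Connected)
    (hatt : ∀ v ∈ A, v ∉ T → ∃ u ∈ T, G.Adj u v) :
    (G.induce (↑(T ∪ A) : Set V)).Connected := by
  have hsub : (↑T : Set V) ⊆ ↑(T ∪ A) := by
    intro x hx
    simp only [Finset.coe_union, Set.mem_union]
    exact Or.inl hx
  obtain ⟨t₀, ht₀⟩ := hT.nonempty
  have key : ∀ x : (↑(T ∪ A) : Set V), (G.induce (↑(T ∪ A) : Set V)).Reachable x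
      ⟨t₀, hsub ht₀⟩ := by
    rintro ⟨v, hv⟩
    by_cases hvT : v ∈ T
    · exact reachable_induce_mono G hsub hvT ht₀ (hT.preconnected ⟨v, hvT⟩ ⟨t₀, ht₀⟩)
    · have hvA : v ∈ A := by
        have := hv
        simp only [Finset.coe_union, Set.mem_union, Finset.mem_coe] at this
        tauto
      obtain ⟨u, huT, hadj⟩ := hatt v hvA hvT
      have h1 : (G.induce (↑(T ∪ A) : Set V)).Adj ⟨v, hv⟩ ⟨u, hsub huT⟩ := by
        simp only [SimpleGraph.comap_adj, Function.Embedding.coe_subtype]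
        exact hadj.symm
      exact h1.reachable.trans
        (reachable_induce_mono G hsub huT ht₀ (hT.preconnected ⟨u, huT⟩ ⟨t₀, ht₀⟩))
  have hne : Nonempty (↑(T ∪ A) : Set V) := ⟨⟨t₀, hsub ht₀⟩⟩
  exact ⟨fun x y => (key x).trans (key y).symm⟩

lemma mem_edgeFinset'_iff {G : SimpleGraph V} {e : Sym2 V} :
    e ∈ edgeFinset' G ↔ e ∈ G.edgeSet := by
  simp [edgeFinset']

lemma edgeFinset'_mono {G G' : SimpleGraph V} (h : G ≤ G') :
    edgeFinset' G ⊆ edgeFinset' G' := by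
  intro e he
  rw [mem_edgeFinset'_iff] at he ⊢
  exact (SimpleGraph.edgeSet_subset_edgeSet.2 h) he

lemma incidence_card_le {G : SimpleGraph V} {d : ℕ} (hdeg : ∀ v, (G.neighborSet v).ncard = d)
    (y : V) : ((edgeFinset' G).filter (fun e => y ∈ e)).card = d := by
  have h1 : edgeFinset' G = G.edgeFinset := by
    ext e
    rw [mem_edgeFinset'_iff, SimpleGraph.mem_edgeFinset]
  rw [h1, ← SimpleGraph.incidenceFinset_eq_filter, SimpleGraph.card_incidenceFinset_eq_degree]
  rw [← SimpleGraph.card_neighborFinset_eq_degree]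
  have := hdeg y
  rwa [Set.ncard_eq_toFinset_card', ← SimpleGraph.neighborFinset_def] at this

/-- One growth step of the red ball. -/
lemma grow_step (G GR : SimpleGraph V) (k : ℕ) (b ε : ℝ) (d : ℕ)
    (hreg : IsRegularExpander G b d) (hGR : GR ≤ G)
    (hred : ∀ S : Finset V, IsThick G k S → ε * Fintype.card V ≤ S.card →
      (S.card : ℝ) ≤ Fintype.card V / 2 → b / 2 * S.card ≤ cutCard GR S)
    (F : Finset (Sym2 V)) (hF : (F.card : ℝ) ≤ b * ε / 4 * Fintype.card V)
    (B : Finset V) (hthick : IsThick G k B)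
    (hlo : ε * Fintype.card V ≤ B.card) (hhi : (B.card : ℝ) ≤ (Fintype.card V : ℝ) / 2)
    (hb : 0 < b) (hd : 0 < d) :
    ∃ B' : Finset V, B ⊆ B' ∧ IsThick G k B' ∧
      (1 + b / (4 * d)) * B.card ≤ (B'.card : ℝ) ∧
      ∀ v ∈ B', v ∈ B ∨ ∃ u ∈ B, (GR.deleteEdges ↑F).Adj u v := by
  set n := Fintype.card V with hn
  set G' := GR.deleteEdges (↑F : Set (Sym2 V)) with hG'
  have hG'GR : G' ≤ GR := SimpleGraph.deleteEdges_le _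
  have hG'G : G' ≤ G := le_trans hG'GR hGR
  set N := Finset.univ.filter (fun v => v ∉ B ∧ ∃ u ∈ B, G'.Adj u v) with hN
  have hNB : Disjoint B N := by
    rw [Finset.disjoint_right]
    intro v hv
    exact ((Finset.mem_filter.1 hv).2).1
  refine ⟨B ∪ N, Finset.subset_union_left, ?_, ?_, ?_⟩
  · -- thickness
    obtain ⟨P, hP, hPd, hPu⟩ := hthick
    have hex : ∀ v ∈ N, ∃ T, T ∈ P ∧ ∃ u ∈ T, G.Adj u v := by
      intro v hv
      obtain ⟨hvB, u, huB, hadj⟩ := (Finset.mem_filter.1 hv).2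
      rw [hPu] at huB
      obtain ⟨T, hT, huT⟩ := Finset.mem_biUnion.1 huB
      exact ⟨T, hT, u, huT, hG'G hadj⟩
    set pick : V → Finset V := fun v =>
      if h : ∃ T, T ∈ P ∧ ∃ u ∈ T, G.Adj u v then h.choose else ∅ with hpickdef
    have hpick : ∀ v ∈ N, pick v ∈ P ∧ ∃ u ∈ pick v, G.Adj u v := by
      intro v hv
      have h := hex v hv
      simp only [hpickdef, dif_pos h]
      exact h.choose_spec
    refine ⟨P.image (fun T => T ∪ N.filter (fun v => pick v = T)), ?_, ?_, ?_⟩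
    · intro T' hT'
      obtain ⟨T, hT, rfl⟩ := Finset.mem_image.1 hT'
      constructor
      · exact le_trans (hP T hT).1 (Finset.card_le_card Finset.subset_union_left)
      · apply connected_attach G T _ (hP T hT).2
        intro v hv _
        have hv1 := Finset.mem_filter.1 hv
        obtain ⟨_, u, hu, hadj⟩ := hpick v hv1.1
        rw [hv1.2] at hu
        exact ⟨u, hu, hadj⟩
    · -- pairwise disjoint
      intro X hX Y hY hXY
      simp only [Finset.coe_image, Set.mem_image, Finset.mem_coe] at hX hY
      obtain ⟨T, hT, rfl⟩ := hX
      obtain ⟨T', hT', rfl⟩ := hY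
      have hTT' : T ≠ T' := by rintro rfl; exact hXY rfl
      have hdTT : Disjoint T T' := hPd hT hT' hTT'
      show Disjoint (T ∪ N.filter (fun v => pick v = T)) (T' ∪ N.filter (fun v => pick v = T'))
      apply Finset.disjoint_union_left.2
      constructor
      · apply Finset.disjoint_union_right.2
        refine ⟨hdTT, ?_⟩
        have : T ⊆ B := by rw [hPu]; intro x hx; exact Finset.mem_biUnion.2 ⟨T, hT, hx⟩
        exact Finset.disjoint_of_subset_right (Finset.filter_subset _ _)
          (Finset.disjoint_of_subset_left this hNB)
      · apply Finset.disjoint_union_right.2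
        constructor
        · have : T' ⊆ B := by rw [hPu]; intro x hx; exact Finset.mem_biUnion.2 ⟨T', hT', hx⟩
          exact Finset.disjoint_of_subset_left (Finset.filter_subset _ _)
            (Finset.disjoint_of_subset_right this hNB.symm)
        · rw [Finset.disjoint_left]
          intro a ha ha'
          have h1 := (Finset.mem_filter.1 ha).2
          have h2 := (Finset.mem_filter.1 ha').2
          exact hTT' (h1 ▸ h2 ▸ rfl)
    · -- biUnion
      ext x
      simp only [Finset.mem_biUnion, Finset.mem_image, id, Finset.mem_union]
      constructor
      · rintro (hx | hx)
        · rw [hPu] at hx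
          obtain ⟨T, hT, hxT⟩ := Finset.mem_biUnion.1 hx
          exact ⟨T ∪ N.filter (fun v => pick v = T), ⟨T, hT, rfl⟩,
            Finset.mem_union_left _ hxT⟩
        · obtain ⟨hTP, _⟩ := hpick x hx
          exact ⟨pick x ∪ N.filter (fun v => pick v = pick x), ⟨pick x, hTP, rfl⟩,
            Finset.mem_union_right _ (Finset.mem_filter.2 ⟨hx, rfl⟩)⟩
      · rintro ⟨X, ⟨T, hT, rfl⟩, hxX⟩
        rcases Finset.mem_union.1 hxX with h | h
        · left; rw [hPu]; exact Finset.mem_biUnion.2 ⟨T, hT, h⟩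
        · right; exact Finset.mem_of_mem_filter x h
  · -- cardinality growth
    have hcut : b / 2 * B.card ≤ cutCard GR B := hred B hthick hlo hhi
    set cutS := (edgeFinset' GR).filter (fun e => ∃ x ∈ B, ∃ y, y ∉ B ∧ e = s(x, y)) with hcutS
    have hsplit : (cutS.card : ℝ) ≤ ((cutS \ F).card : ℝ) + F.card := by
      have : cutS ⊆ (cutS \ F) ∪ F := by
        intro e he
        by_cases hf : e ∈ F
        · exact Finset.mem_union_right _ hf
        · exact Finset.mem_union_left _ (Finset.mem_sdiff.2 ⟨he, hf⟩)
      calc (cutS.card : ℝ) ≤ (((cutS \ F) ∪ F).card : ℝ) := by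
            exact_mod_cast Finset.card_le_card this
        _ ≤ _ := by exact_mod_cast Finset.card_union_le _ _
    have hsub2 : cutS \ F ⊆ N.biUnion (fun y => (edgeFinset' G).filter (fun e => y ∈ e)) := by
      intro e he
      obtain ⟨he1, he2⟩ := Finset.mem_sdiff.1 he
      obtain ⟨heGR, x, hxB, y, hyB, rfl⟩ := Finset.mem_filter.1 he1
      have hadj : GR.Adj x y := (GR.mem_edgeSet).1 (mem_edgeFinset'_iff.1 heGR)
      have hadj' : G'.Adj x y := by
        rw [hG', SimpleGraph.deleteEdges_adj]
        exact ⟨hadj, by simpa using he2⟩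
      have hyN : y ∈ N := Finset.mem_filter.2 ⟨Finset.mem_univ y, hyB, x, hxB, hadj'⟩
      apply Finset.mem_biUnion.2 ⟨y, hyN, ?_⟩
      apply Finset.mem_filter.2
      exact ⟨edgeFinset'_mono hGR heGR, by simp⟩
    have hcount : ((cutS \ F).card : ℝ) ≤ (N.card : ℝ) * d := by
      calc ((cutS \ F).card : ℝ)
          ≤ ((N.biUnion (fun y => (edgeFinset' G).filter (fun e => y ∈ e))).card : ℝ) := by
            exact_mod_cast Finset.card_le_card hsub2
        _ ≤ (∑ y ∈ N, ((edgeFinset' G).filter (fun e => y ∈ e)).card : ℕ) := by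
            exact_mod_cast Finset.card_biUnion_le
        _ = (N.card : ℝ) * d := by
            rw [Finset.sum_congr rfl (fun y _ => incidence_card_le hreg.2 y), Finset.sum_const,
              smul_eq_mul]
            push_cast
            ring
    have hB4 : b / 4 * B.card ≤ (N.card : ℝ) * d := by
      have h1 : (F.card : ℝ) ≤ b / 4 * B.card := by
        calc (F.card : ℝ) ≤ b * ε / 4 * n := hF
          _ = b / 4 * (ε * n) := by ring
          _ ≤ b / 4 * B.card := by
            apply mul_le_mul_of_nonneg_left hlo (by positivity)
      have h2 : (cutCard GR B : ℝ) = cutS.card := by rw [cutCard, hcutS]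
      nlinarith [hcut, hsplit, hcount]
    have hcardu : ((B ∪ N).card : ℝ) = B.card + N.card := by
      exact_mod_cast Finset.card_union_of_disjoint hNB
    rw [hcardu]
    have hdpos : (0:ℝ) < d := by exact_mod_cast hd
    have hN4 : b / (4 * d) * B.card ≤ (N.card : ℝ) := by
      rw [div_mul_eq_mul_div, div_le_iff₀ (by positivity : (0:ℝ) < 4 * d)]
      nlinarith [hB4]
    nlinarith [hN4]
  · intro v hv
    rcases Finset.mem_union.1 hv with h | h
    · exact Or.inl h
    · exact Or.inr (Finset.mem_filter.1 h).2.2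


/-- Growing a red ball around a thick family until it covers more than half the vertices. -/
lemma grow_ball (G GR : SimpleGraph V) (k : ℕ) (b ε : ℝ) (d : ℕ) (L : ℕ)
    (hreg : IsRegularExpander G b d) (hGR : GR ≤ G)
    (hred : ∀ S : Finset V, IsThick G k S → ε * Fintype.card V ≤ S.card →
      (S.card : ℝ) ≤ Fintype.card V / 2 → b / 2 * S.card ≤ cutCard GR S)
    (F : Finset (Sym2 V)) (hF : (F.card : ℝ) ≤ b * ε / 4 * Fintype.card V)
    (hb : 0 < b) (hd : 0 < d) (hε : 0 < ε) (hcard : 1 ≤ Fintype.card V)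
    (hL : (1:ℝ) ≤ (1 + b / (4 * d)) ^ L * ε)
    (𝒮₁ : Finset (Finset V))
    (h𝒮₁ : ∀ T ∈ 𝒮₁, k ≤ T.card ∧ (G.induce (↑T : Set V)).Connected)
    (h𝒮₁d : (↑𝒮₁ : Set (Finset V)).PairwiseDisjoint id)
    (hU : ε * Fintype.card V ≤ ((𝒮₁.biUnion id).card : ℝ)) :
    ∃ B : Finset V, 𝒮₁.biUnion id ⊆ B ∧ (Fintype.card V : ℝ) < 2 * B.card ∧
      ∀ v ∈ B, ∃ x ∈ 𝒮₁.biUnion id, ∃ w : (GR.deleteEdges (↑F : Set (Sym2 V))).Walk x v,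
        w.length ≤ L := by
  set n := Fintype.card V with hn
  set U := 𝒮₁.biUnion id with hU1
  set β := b / (4 * d) with hβ
  have hβpos : 0 < β := by positivity
  have main : ∀ j : ℕ, ∃ B : Finset V, U ⊆ B ∧ IsThick G k B ∧
      (∀ v ∈ B, ∃ x ∈ U, ∃ w : (GR.deleteEdges (↑F : Set (Sym2 V))).Walk x v, w.length ≤ j) ∧
      ((n : ℝ) < 2 * B.card ∨ (1 + β) ^ j * (ε * n) ≤ B.card) := by
    intro j
    induction j with
    | zero =>
      refine ⟨U, le_refl U, ⟨𝒮₁, h𝒮₁, h𝒮₁d, rfl⟩, ?_, Or.inr (by simpa using hU)⟩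
      intro v hv
      exact ⟨v, hv, SimpleGraph.Walk.nil, by simp⟩
    | succ j ih =>
      obtain ⟨B, hUB, hthick, hwalk, hgrow⟩ := ih
      by_cases hc : (n : ℝ) < 2 * B.card
      · refine ⟨B, hUB, hthick, ?_, Or.inl hc⟩
        intro v hv
        obtain ⟨x, hx, w, hw⟩ := hwalk v hv
        exact ⟨x, hx, w, le_trans hw (Nat.le_succ j)⟩
      · have hhi : (B.card : ℝ) ≤ (n : ℝ) / 2 := by push_neg at hc; linarith
        have hlo : ε * n ≤ (B.card : ℝ) :=
          le_trans hU (by exact_mod_cast Finset.card_le_card hUB)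
        obtain ⟨B', hBB', hthick', hcard', hnew⟩ :=
          grow_step G GR k b ε d hreg hGR hred F hF B hthick hlo hhi hb hd
        refine ⟨B', le_trans hUB hBB', hthick', ?_, ?_⟩
        · intro v hv
          rcases hnew v hv with h | ⟨u, hu, hadj⟩
          · obtain ⟨x, hx, w, hw⟩ := hwalk v h
            exact ⟨x, hx, w, le_trans hw (Nat.le_succ j)⟩
          · obtain ⟨x, hx, w, hw⟩ := hwalk u hu
            refine ⟨x, hx, w.concat hadj, ?_⟩
            rw [SimpleGraph.Walk.length_concat]
            omega
        · right
          have hprev : (1 + β) ^ j * (ε * n) ≤ B.card := by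
            rcases hgrow with h | h
            · exact absurd h hc
            · exact h
          calc (1 + β) ^ (j+1) * (ε * n) = (1 + β) * ((1 + β) ^ j * (ε * n)) := by ring
            _ ≤ (1 + β) * B.card := by
                apply mul_le_mul_of_nonneg_left hprev (by positivity)
            _ ≤ B'.card := hcard'
  obtain ⟨B, hUB, _, hwalk, hgrow⟩ := main L
  refine ⟨B, hUB, ?_, hwalk⟩
  rcases hgrow with h | h
  · exact h
  · have h1 : (n : ℝ) ≤ (1 + β) ^ L * (ε * n) := by
      have : (1:ℝ) * n ≤ ((1 + β) ^ L * ε) * n := by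
        apply mul_le_mul_of_nonneg_right hL (by positivity)
      calc (n:ℝ) = 1 * n := by ring
        _ ≤ ((1 + β) ^ L * ε) * n := this
        _ = (1 + β) ^ L * (ε * n) := by ring
    have h2 : (n : ℝ) ≤ B.card := le_trans h1 h
    have h3 : (1:ℝ) ≤ n := by exact_mod_cast hcard
    linarith

/-- A bounded-length red walk avoiding `F` between two large thick families. -/
lemma merge_walk (G GR : SimpleGraph V) (k : ℕ) (b ε : ℝ) (d : ℕ) (L : ℕ)
    (hreg : IsRegularExpander G b d) (hGR : GR ≤ G)
    (hred : ∀ S : Finset V, IsThick G k S → ε * Fintype.card V ≤ S.card →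
      (S.card : ℝ) ≤ Fintype.card V / 2 → b / 2 * S.card ≤ cutCard GR S)
    (F : Finset (Sym2 V)) (hF : (F.card : ℝ) ≤ b * ε / 4 * Fintype.card V)
    (hb : 0 < b) (hd : 0 < d) (hε : 0 < ε) (hcard : 1 ≤ Fintype.card V)
    (hL : (1:ℝ) ≤ (1 + b / (4 * d)) ^ L * ε)
    (𝒮₁ 𝒮₂ : Finset (Finset V))
    (h𝒮₁ : ∀ T ∈ 𝒮₁, k ≤ T.card ∧ (G.induce (↑T : Set V)).Connected)
    (h𝒮₁d : (↑𝒮₁ : Set (Finset V)).PairwiseDisjoint id)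
    (hU₁ : ε * Fintype.card V ≤ ((𝒮₁.biUnion id).card : ℝ))
    (h𝒮₂ : ∀ T ∈ 𝒮₂, k ≤ T.card ∧ (G.induce (↑T : Set V)).Connected)
    (h𝒮₂d : (↑𝒮₂ : Set (Finset V)).PairwiseDisjoint id)
    (hU₂ : ε * Fintype.card V ≤ ((𝒮₂.biUnion id).card : ℝ)) :
    ∃ x ∈ 𝒮₁.biUnion id, ∃ y ∈ 𝒮₂.biUnion id,
      ∃ w : (GR.deleteEdges (↑F : Set (Sym2 V))).Walk x y, w.length ≤ 2 * L := by
  obtain ⟨B₁, hUB₁, hB₁, hwalk₁⟩ :=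
    grow_ball G GR k b ε d L hreg hGR hred F hF hb hd hε hcard hL 𝒮₁ h𝒮₁ h𝒮₁d hU₁
  obtain ⟨B₂, hUB₂, hB₂, hwalk₂⟩ :=
    grow_ball G GR k b ε d L hreg hGR hred F hF hb hd hε hcard hL 𝒮₂ h𝒮₂ h𝒮₂d hU₂
  have hinter : (B₁ ∩ B₂).Nonempty := by
    by_contra hcon
    rw [Finset.not_nonempty_iff_eq_empty] at hcon
    have hdisj : Disjoint B₁ B₂ := Finset.disjoint_iff_inter_eq_empty.2 hcon
    have h1 : B₁.card + B₂.card = (B₁ ∪ B₂).card := (Finset.card_union_of_disjoint hdisj).symm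
    have h2 : (B₁ ∪ B₂).card ≤ Fintype.card V := Finset.card_le_univ _
    have : ((B₁.card : ℝ) + B₂.card) ≤ Fintype.card V := by exact_mod_cast h1 ▸ h2
    linarith
  obtain ⟨z, hz⟩ := hinter
  obtain ⟨hz₁, hz₂⟩ := Finset.mem_inter.1 hz
  obtain ⟨x, hx, w₁, hw₁⟩ := hwalk₁ z hz₁
  obtain ⟨y, hy, w₂, hw₂⟩ := hwalk₂ z hz₂
  refine ⟨x, hx, y, hy, w₁.append w₂.reverse, ?_⟩
  rw [SimpleGraph.Walk.length_append, SimpleGraph.Walk.length_reverse]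
  omega


lemma subset_foldr_union {α : Type*} [DecidableEq α] {l : List (Finset α)} {A : Finset α}
    (hA : A ∈ l) : A ⊆ l.foldr (· ∪ ·) ∅ := by
  induction l with
  | nil => simp at hA
  | cons B l ih =>
    rcases List.mem_cons.1 hA with rfl | h
    · exact Finset.subset_union_left
    · exact (ih h).trans Finset.subset_union_right

lemma card_foldr_union_le {α : Type*} [DecidableEq α] (l : List (Finset α)) (c : ℕ)
    (h : ∀ A ∈ l, A.card ≤ c) : (l.foldr (· ∪ ·) ∅).card ≤ c * l.length := by
  induction l with
  | nil => simp
  | cons B l ih =>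
    calc ((B :: l).foldr (· ∪ ·) ∅).card ≤ B.card + (l.foldr (· ∪ ·) ∅).card :=
          Finset.card_union_le _ _
      _ ≤ c + c * l.length := by
          have := ih (fun A hA => h A (List.mem_cons_of_mem B hA))
          have hB := h B List.mem_cons_self
          omega
      _ = c * (B :: l).length := by simp [List.length_cons]; ring

lemma greedy_paths (G GR : SimpleGraph V) (k : ℕ) (b ε : ℝ) (d : ℕ) (L : ℕ)
    (hreg : IsRegularExpander G b d) (hGR : GR ≤ G)
    (hred : ∀ S : Finset V, IsThick G k S → ε * Fintype.card V ≤ S.card →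
      (S.card : ℝ) ≤ Fintype.card V / 2 → b / 2 * S.card ≤ cutCard GR S)
    (hb : 0 < b) (hd : 0 < d) (hε : 0 < ε) (hcard : 1 ≤ Fintype.card V)
    (hL : (1:ℝ) ≤ (1 + b / (4 * d)) ^ L * ε)
    (𝒮₁ 𝒮₂ : Finset (Finset V))
    (h𝒮₁ : ∀ T ∈ 𝒮₁, k ≤ T.card ∧ (G.induce (↑T : Set V)).Connected)
    (h𝒮₁d : (↑𝒮₁ : Set (Finset V)).PairwiseDisjoint id)
    (hU₁ : ε * Fintype.card V ≤ ((𝒮₁.biUnion id).card : ℝ))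
    (h𝒮₂ : ∀ T ∈ 𝒮₂, k ≤ T.card ∧ (G.induce (↑T : Set V)).Connected)
    (h𝒮₂d : (↑𝒮₂ : Set (Finset V)).PairwiseDisjoint id)
    (hU₂ : ε * Fintype.card V ≤ ((𝒮₂.biUnion id).card : ℝ)) :
    ∀ m : ℕ, ((2 * L * m : ℕ) : ℝ) ≤ b * ε / 4 * Fintype.card V →
    ∃ l : List (Finset (Sym2 V)), l.length = m ∧ l.Pairwise Disjoint ∧
      ∀ Fi ∈ l, Fi ⊆ edgeFinset' G ∧ Fi.card ≤ 2 * L ∧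
        ∀ s : Finset (Sym2 V), Fi ⊆ s →
          ∃ x ∈ 𝒮₁.biUnion id, ∃ y ∈ 𝒮₂.biUnion id,
            (SimpleGraph.fromEdgeSet (↑s : Set (Sym2 V)) ⊓ GR).Reachable x y := by
  intro m
  induction m with
  | zero => intro _; exact ⟨[], rfl, List.Pairwise.nil, by simp⟩
  | succ m ih =>
    intro hm
    have hmono : ((2 * L * m : ℕ) : ℝ) ≤ ((2 * L * (m + 1) : ℕ) : ℝ) := by
      exact_mod_cast Nat.mul_le_mul_left (2 * L) (Nat.le_succ m)
    obtain ⟨l, hlen, hpair, hprop⟩ := ih (le_trans hmono hm)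
    set F := l.foldr (· ∪ ·) ∅ with hFdef
    have hFcard : (F.card : ℝ) ≤ b * ε / 4 * Fintype.card V := by
      have h1 : F.card ≤ 2 * L * m := by
        have := card_foldr_union_le l (2 * L) (fun A hA => (hprop A hA).2.1)
        rwa [hlen] at this
      calc (F.card : ℝ) ≤ ((2 * L * m : ℕ) : ℝ) := by exact_mod_cast h1
        _ ≤ _ := le_trans hmono hm
    obtain ⟨x, hx, y, hy, w, hw⟩ :=
      merge_walk G GR k b ε d L hreg hGR hred F hFcard hb hd hε hcard hL 𝒮₁ 𝒮₂
        h𝒮₁ h𝒮₁d hU₁ h𝒮₂ h𝒮₂d hU₂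
    have hedges : ∀ e ∈ w.edges, e ∈ (GR.deleteEdges (↑F : Set (Sym2 V))).edgeSet :=
      fun e he => w.edges_subset_edgeSet he
    have hGRedge : ∀ e ∈ w.edges, e ∈ GR.edgeSet := by
      intro e he
      have := hedges e he
      rw [SimpleGraph.edgeSet_deleteEdges] at this
      exact this.1
    have hnotF : ∀ e ∈ w.edges, e ∉ F := by
      intro e he
      have := hedges e he
      rw [SimpleGraph.edgeSet_deleteEdges] at this
      simpa using this.2
    refine ⟨w.edges.toFinset :: l, by simp [hlen], ?_, ?_⟩
    · rw [List.pairwise_cons]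
      refine ⟨?_, hpair⟩
      intro A hA
      rw [Finset.disjoint_left]
      intro e he heA
      exact hnotF e (List.mem_toFinset.1 he) (subset_foldr_union hA heA)
    · intro Fi hFi
      rcases List.mem_cons.1 hFi with rfl | h
      · refine ⟨?_, ?_, ?_⟩
        · intro e he
          rw [mem_edgeFinset'_iff]
          exact SimpleGraph.edgeSet_subset_edgeSet.2 hGR (hGRedge e (List.mem_toFinset.1 he))
        · calc w.edges.toFinset.card ≤ w.edges.length := List.toFinset_card_le _
            _ = w.length := w.length_edges
            _ ≤ 2 * L := hw
        · intro s hsub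
          refine ⟨x, hx, y, hy, ?_⟩
          have htrans : ∀ e ∈ w.edges,
              e ∈ (SimpleGraph.fromEdgeSet (↑s : Set (Sym2 V)) ⊓ GR).edgeSet := by
            intro e he
            rw [SimpleGraph.edgeSet_inf]
            constructor
            · rw [SimpleGraph.edgeSet_fromEdgeSet]
              refine ⟨hsub (List.mem_toFinset.2 he), ?_⟩
              exact SimpleGraph.not_isDiag_of_mem_edgeSet GR (hGRedge e he)
            · exact hGRedge e he
          exact ⟨w.transfer _ htrans⟩
      · exact hprop Fi h


lemma list_prod_le_pow {l : List ℝ} {q : ℝ} (hq : 0 ≤ q) (h : ∀ x ∈ l, 0 ≤ x ∧ x ≤ q) :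
    l.prod ≤ q ^ l.length := by
  induction l with
  | nil => simp
  | cons x l ih =>
    have hx := h x List.mem_cons_self
    have hl := ih (fun y hy => h y (List.mem_cons_of_mem x hy))
    have hprod : 0 ≤ l.prod := List.prod_nonneg (fun y hy => (h y (List.mem_cons_of_mem x hy)).1)
    calc (x :: l).prod = x * l.prod := List.prod_cons
      _ ≤ q * q ^ l.length := mul_le_mul hx.2 hl hprod hq
      _ = q ^ (x :: l).length := by rw [List.length_cons, pow_succ]; ring

lemma percProb_eq_one (G : SimpleGraph V) (p : ℝ) (P : SimpleGraph V → Prop)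
    (h : ∀ H, P H) : percProb G p P = 1 := by
  have heq : ∀ s ∈ (edgeFinset' G).powerset,
      (p ^ s.card * (1 - p) ^ ((edgeFinset' G).card - s.card)) *
        (if P (SimpleGraph.fromEdgeSet (↑s)) then (1:ℝ) else 0) = pw p (edgeFinset' G) s := by
    intro s _
    rw [if_pos (h _), mul_one]
    rfl
  rw [percProb, Finset.sum_congr rfl heq, sum_pw]

end Aux

set_option maxHeartbeats 2000000 in
theorem red_sprinkling_connects_large_families (b : ℝ) (d : ℕ) (ε : ℝ)
    (hb : 0 < b) (hd : 0 < d) (hε : 0 < ε) :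
    ∃ k : ℕ, 0 < k ∧ ∃ c > (0:ℝ), ∃ n₀ : ℕ,
      ∀ (V : Type) [Fintype V] [DecidableEq V] (G GR : SimpleGraph V),
        n₀ ≤ Fintype.card V → IsRegularExpander G b d → GR ≤ G →
        (∀ S : Finset V, IsThick G k S →
          ε * Fintype.card V ≤ S.card → (S.card : ℝ) ≤ Fintype.card V / 2 →
          b / 2 * S.card ≤ cutCard GR S) →
        ∀ 𝒮 : Finset (Finset V),
          (↑𝒮 : Set (Finset V)).PairwiseDisjoint id →
          (∀ T ∈ 𝒮, k ≤ T.card ∧ (G.induce (↑T : Set V)).Connected) →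
          1 - Real.exp (-c * Fintype.card V) ≤
            percProb G ε (fun H =>
              ∀ 𝒮₁ ⊆ 𝒮, ∀ 𝒮₂ ⊆ 𝒮,
                ε * Fintype.card V ≤ ((𝒮₁.biUnion id).card : ℝ) →
                ε * Fintype.card V ≤ ((𝒮₂.biUnion id).card : ℝ) →
                ∃ x ∈ 𝒮₁.biUnion id, ∃ y ∈ 𝒮₂.biUnion id,
                  (H ⊓ GR).Reachable x y) := by
  have hd' : (0:ℝ) < d := by exact_mod_cast hd
  set β : ℝ := b / (4 * d) with hβ
  have hβpos : 0 < β := by positivity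
  obtain ⟨L, hL⟩ := pow_unbounded_of_one_lt (1/ε) (by linarith : (1:ℝ) < 1 + β)
  have hLε : (1:ℝ) ≤ (1 + β) ^ L * ε := by
    rw [div_lt_iff₀ hε] at hL
    linarith
  set δ : ℝ := b * ε / 4 with hδ
  have hδpos : 0 < δ := by positivity
  set a : ℝ := ε ^ (2*L) * δ / (2*(L:ℝ)+1) with ha
  have hapos : 0 < a := by positivity
  set k := max 1 (Nat.ceil ((4 * Real.log 2) / a)) with hk
  have hk1 : 1 ≤ k := le_max_left _ _
  refine ⟨k, hk1, a/4, by positivity, max 1 (Nat.ceil (4 / a)), ?_⟩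
  intro V _ _ G GR hn hreg hGR hred 𝒮 h𝒮d h𝒮
  set n := Fintype.card V with hnn
  have hn1 : 1 ≤ n := le_trans (le_max_left _ _) hn
  have hn1' : (1:ℝ) ≤ n := by exact_mod_cast hn1
  have hn4a : 4 / a ≤ (n:ℝ) := by
    have h1 : (Nat.ceil (4/a) : ℝ) ≤ n := by
      exact_mod_cast le_trans (le_max_right 1 (Nat.ceil (4/a))) hn
    exact le_trans (Nat.le_ceil _) h1
  by_cases hε1 : ε ≤ 1
  · -- main case
    set m := Nat.floor (δ * n / (2*(L:ℝ)+1)) with hm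
    have hLpos : (0:ℝ) < 2*(L:ℝ)+1 := by positivity
    have hmle : (m:ℝ) ≤ δ * n / (2*(L:ℝ)+1) := Nat.floor_le (by positivity)
    have hmbound : ((2 * L * m : ℕ) : ℝ) ≤ b * ε / 4 * n := by
      have h1 : ((2 * L * m : ℕ) : ℝ) = 2*(L:ℝ) * m := by push_cast; ring
      have h2 : (2*(L:ℝ)) * m ≤ (2*(L:ℝ)+1) * m := by nlinarith [Nat.cast_nonneg (α := ℝ) m]
      have h3 : (2*(L:ℝ)+1) * m ≤ δ * n := by
        calc (2*(L:ℝ)+1) * m ≤ (2*(L:ℝ)+1) * (δ * n / (2*(L:ℝ)+1)) :=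
              mul_le_mul_of_nonneg_left hmle (by positivity)
          _ = δ * n := by field_simp
      rw [h1]
      calc 2*(L:ℝ) * m ≤ δ * n := le_trans h2 h3
        _ = b * ε / 4 * n := by rw [hδ]
    set I := (𝒮.powerset ×ˢ 𝒮.powerset).filter
      (fun q : Finset (Finset V) × Finset (Finset V) =>
        ε * n ≤ ((q.1.biUnion id).card : ℝ) ∧ ε * n ≤ ((q.2.biUnion id).card : ℝ)) with hI
    have hIg : ∀ q ∈ I, ∃ l : List (Finset (Sym2 V)), l.length = m ∧ l.Pairwise Disjoint ∧
        ∀ Fi ∈ l, Fi ⊆ edgeFinset' G ∧ Fi.card ≤ 2 * L ∧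
          ∀ s : Finset (Sym2 V), Fi ⊆ s →
            ∃ x ∈ q.1.biUnion id, ∃ y ∈ q.2.biUnion id,
              (SimpleGraph.fromEdgeSet (↑s : Set (Sym2 V)) ⊓ GR).Reachable x y := by
      intro q hq
      rw [hI, Finset.mem_filter, Finset.mem_product, Finset.mem_powerset,
        Finset.mem_powerset] at hq
      obtain ⟨⟨hq1, hq2⟩, hc1, hc2⟩ := hq
      have hsub1 : (↑q.1 : Set (Finset V)) ⊆ ↑𝒮 := by exact_mod_cast hq1
      have hsub2 : (↑q.2 : Set (Finset V)) ⊆ ↑𝒮 := by exact_mod_cast hq2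
      exact greedy_paths G GR k b ε d L hreg hGR hred hb hd hε hn1 hLε q.1 q.2
        (fun T hT => h𝒮 T (hq1 hT)) (h𝒮d.subset hsub1) hc1
        (fun T hT => h𝒮 T (hq2 hT)) (h𝒮d.subset hsub2) hc2 m hmbound
    set Fs : Finset (Finset V) × Finset (Finset V) → List (Finset (Sym2 V)) :=
      fun q => if hq : q ∈ I then (hIg q hq).choose else [] with hFs
    have hFsspec : ∀ q (hq : q ∈ I), (Fs q).length = m ∧ (Fs q).Pairwise Disjoint ∧
        ∀ Fi ∈ Fs q, Fi ⊆ edgeFinset' G ∧ Fi.card ≤ 2 * L ∧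
          ∀ s : Finset (Sym2 V), Fi ⊆ s →
            ∃ x ∈ q.1.biUnion id, ∃ y ∈ q.2.biUnion id,
              (SimpleGraph.fromEdgeSet (↑s : Set (Sym2 V)) ⊓ GR).Reachable x y := by
      intro q hq
      simp only [hFs, dif_pos hq]
      exact (hIg q hq).choose_spec
    have hcover : ∀ s : Finset (Sym2 V), s ⊆ edgeFinset' G →
        ¬ (∀ 𝒮₁ ⊆ 𝒮, ∀ 𝒮₂ ⊆ 𝒮,
            ε * n ≤ ((𝒮₁.biUnion id).card : ℝ) →
            ε * n ≤ ((𝒮₂.biUnion id).card : ℝ) →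
            ∃ x ∈ 𝒮₁.biUnion id, ∃ y ∈ 𝒮₂.biUnion id,
              (SimpleGraph.fromEdgeSet (↑s : Set (Sym2 V)) ⊓ GR).Reachable x y) →
        ∃ q ∈ I, ∀ A ∈ Fs q, ¬ A ⊆ s := by
      intro s hs hP
      push_neg at hP
      obtain ⟨𝒮₁, h1, 𝒮₂, h2, hc1, hc2, hno⟩ := hP
      have hqI : (𝒮₁, 𝒮₂) ∈ I := by
        rw [hI, Finset.mem_filter, Finset.mem_product, Finset.mem_powerset, Finset.mem_powerset]
        exact ⟨⟨h1, h2⟩, hc1, hc2⟩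
      refine ⟨(𝒮₁, 𝒮₂), hqI, ?_⟩
      intro A hA hAs
      obtain ⟨x, hx, y, hy, hr⟩ := ((hFsspec _ hqI).2.2 A hA).2.2 s hAs
      exact hno x hx y hy hr
    have hperc := percProb_ge G ε (le_of_lt hε) hε1
      (fun H => ∀ 𝒮₁ ⊆ 𝒮, ∀ 𝒮₂ ⊆ 𝒮,
        ε * n ≤ ((𝒮₁.biUnion id).card : ℝ) →
        ε * n ≤ ((𝒮₂.biUnion id).card : ℝ) →
        ∃ x ∈ 𝒮₁.biUnion id, ∃ y ∈ 𝒮₂.biUnion id,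
          (H ⊓ GR).Reachable x y)
      I Fs (fun q hq => (hFsspec q hq).2.1)
      (fun q hq => fun A hA => ((hFsspec q hq).2.2 A hA).1) hcover
    have hsum : ∑ q ∈ I, ((Fs q).map (fun A => 1 - ε ^ A.card)).prod
        ≤ Real.exp (-(a/4) * n) := by
      set q₀ : ℝ := 1 - ε ^ (2*L) with hq₀
      have hεp1 : ε ^ (2*L) ≤ 1 := pow_le_one₀ (le_of_lt hε) hε1
      have hq₀0 : 0 ≤ q₀ := by rw [hq₀]; linarith
      have hterm : ∀ q ∈ I, ((Fs q).map (fun A => 1 - ε ^ A.card)).prod ≤ q₀ ^ m := by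
        intro q hq
        obtain ⟨hlen, _, hprop⟩ := hFsspec q hq
        have := list_prod_le_pow hq₀0 (l := (Fs q).map (fun A => 1 - ε ^ A.card))
          (q := q₀) ?_
        · rwa [List.length_map, hlen] at this
        · intro x hx
          rw [List.mem_map] at hx
          obtain ⟨A, hA, rfl⟩ := hx
          have h1 : ε ^ A.card ≤ 1 := pow_le_one₀ (le_of_lt hε) hε1
          have h2 : ε ^ (2*L) ≤ ε ^ A.card :=
            pow_le_pow_of_le_one (le_of_lt hε) hε1 (hprop A hA).2.1
          constructor
          · linarith
          · rw [hq₀]; linarith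
      have hcount : (I.card : ℝ) ≤ (2:ℝ) ^ (2 * 𝒮.card) := by
        have h1 : I.card ≤ (𝒮.powerset ×ˢ 𝒮.powerset).card := Finset.card_le_card
          (Finset.filter_subset _ _)
        have h2 : (𝒮.powerset ×ˢ 𝒮.powerset).card = 2 ^ 𝒮.card * 2 ^ 𝒮.card := by
          rw [Finset.card_product, Finset.card_powerset]
        have h3 : I.card ≤ 2 ^ (2 * 𝒮.card) := by
          rw [two_mul, pow_add]; omega
        exact_mod_cast h3
      have hSn : (k:ℝ) * 𝒮.card ≤ n := by
        have hdisj : ∀ x ∈ 𝒮, ∀ y ∈ 𝒮, x ≠ y → Disjoint (id x) (id y) :=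
          fun x hx y hy hxy => h𝒮d hx hy hxy
        have h1 : (𝒮.biUnion id).card = ∑ T ∈ 𝒮, T.card := Finset.card_biUnion hdisj
        have h2 : k * 𝒮.card ≤ ∑ T ∈ 𝒮, T.card := by
          calc k * 𝒮.card = ∑ _T ∈ 𝒮, k := by rw [Finset.sum_const, smul_eq_mul]; ring
            _ ≤ ∑ T ∈ 𝒮, T.card := Finset.sum_le_sum (fun T hT => (h𝒮 T hT).1)
        have h3 : (𝒮.biUnion id).card ≤ n := Finset.card_le_univ _
        exact_mod_cast le_trans h2 (h1 ▸ h3)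
      have hklog : (4 * Real.log 2) / a ≤ (k:ℝ) := by
        exact le_trans (Nat.le_ceil _) (by exact_mod_cast le_max_right 1 _)
      have hlogS : 4 * Real.log 2 * 𝒮.card ≤ a * n := by
        have h1 : (4 * Real.log 2) / a * 𝒮.card ≤ (k:ℝ) * 𝒮.card :=
          mul_le_mul_of_nonneg_right hklog (Nat.cast_nonneg _)
        have h2 : (4 * Real.log 2) / a * 𝒮.card ≤ n := le_trans h1 hSn
        calc 4 * Real.log 2 * (𝒮.card:ℝ) = a * ((4 * Real.log 2) / a * 𝒮.card) := by
              field_simp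
          _ ≤ a * n := mul_le_mul_of_nonneg_left h2 (le_of_lt hapos)
      have hmlow : a * n - 1 ≤ ε ^ (2*L) * m := by
        have h1 : δ * n / (2*(L:ℝ)+1) - 1 ≤ m := by
          have := Nat.sub_one_lt_floor (δ * n / (2*(L:ℝ)+1))
          rw [← hm] at this
          linarith
        have h2 : ε ^ (2*L) * (δ * n / (2*(L:ℝ)+1) - 1) ≤ ε ^ (2*L) * m :=
          mul_le_mul_of_nonneg_left h1 (by positivity)
        have h3 : ε ^ (2*L) * (δ * n / (2*(L:ℝ)+1)) = a * n := by
          rw [ha]; field_simp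
        nlinarith [pow_pos hε (2*L), hεp1]
      have hA2 : (2:ℝ) ^ (2 * 𝒮.card) = Real.exp (((2 * 𝒮.card : ℕ):ℝ) * Real.log 2) := by
        rw [Real.exp_nat_mul, Real.exp_log (by norm_num : (0:ℝ) < 2)]
      have hq₀exp : q₀ ^ m ≤ Real.exp (-(ε^(2*L)) * m) := by
        have h1 : q₀ ≤ Real.exp (-(ε^(2*L))) := by
          have := Real.add_one_le_exp (-(ε^(2*L)))
          rw [hq₀]; linarith
        calc q₀ ^ m ≤ (Real.exp (-(ε^(2*L)))) ^ m := pow_le_pow_left₀ hq₀0 h1 m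
          _ = Real.exp (-(ε^(2*L)) * m) := by rw [← Real.exp_nat_mul, mul_comm]
      calc ∑ q ∈ I, ((Fs q).map (fun A => 1 - ε ^ A.card)).prod
          ≤ ∑ _q ∈ I, q₀ ^ m := Finset.sum_le_sum hterm
        _ = (I.card : ℝ) * q₀ ^ m := by rw [Finset.sum_const, nsmul_eq_mul]
        _ ≤ (2:ℝ) ^ (2 * 𝒮.card) * q₀ ^ m :=
            mul_le_mul_of_nonneg_right hcount (pow_nonneg hq₀0 _)
        _ ≤ Real.exp (((2 * 𝒮.card : ℕ):ℝ) * Real.log 2) * Real.exp (-(ε^(2*L)) * m) := by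
            rw [hA2]
            exact mul_le_mul_of_nonneg_left hq₀exp (le_of_lt (Real.exp_pos _))
        _ ≤ Real.exp (-(a/4) * n) := by
            rw [← Real.exp_add, Real.exp_le_exp]
            have hx1 : ((2 * 𝒮.card : ℕ):ℝ) * Real.log 2 ≤ a * n / 2 := by
              push_cast
              nlinarith [hlogS]
            have hx3 : 1 ≤ a * n / 4 := by
              rw [div_le_iff₀ hapos] at hn4a
              linarith
            nlinarith [hmlow]
    linarith [hperc, hsum]
  · -- ε > 1 : the property holds vacuously
    push_neg at hε1
    have hall : ∀ H : SimpleGraph V,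
        (∀ 𝒮₁ ⊆ 𝒮, ∀ 𝒮₂ ⊆ 𝒮,
          ε * n ≤ ((𝒮₁.biUnion id).card : ℝ) →
          ε * n ≤ ((𝒮₂.biUnion id).card : ℝ) →
          ∃ x ∈ 𝒮₁.biUnion id, ∃ y ∈ 𝒮₂.biUnion id, (H ⊓ GR).Reachable x y) := by
      intro H 𝒮₁ _ 𝒮₂ _ hc1 _
      exfalso
      have h1 : ((𝒮₁.biUnion id).card : ℝ) ≤ n := by
        exact_mod_cast Finset.card_le_univ _
      nlinarith
    rw [percProb_eq_one G ε _ hall]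
    have := Real.exp_pos (-(a/4) * (n:ℝ))
    linarith

end Percolation

end
end

section
/- Let k and l be positive integers, and let G = (V,E) be a finite simple graph with more than k vertices such that every vertex subset A ⊆ V with |A| = k has at least l neighbors in V∖A (i.e., at least l vertices outside A each adjacent to some vertex of A). Then G contains a simple path of length l (a path with l edges and l+1 pairwise distinct vertices). -/
open scoped Classical symmDiff

noncomputable section

namespace Percolation

variable {V : Type} [Fintype V] [DecidableEq V]

lemma take_path' {G : SimpleGraph V} : ∀ {u w : V} (P : G.Walk u w), P.IsPath →
    ∀ n, n ≤ P.length → ∃ (x : V) (Q : G.Walk u x), Q.IsPath ∧ Q.length = n ∧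
      ∀ v ∈ Q.support, v ∈ P.support := by
  intro u w P
  induction P with
  | @nil a =>
    intro _ n hn
    have : n = 0 := by simpa using hn
    subst this
    exact ⟨a, .nil, by simp, rfl, by simp⟩
  | @cons a b c h p ih =>
    intro hP n hn
    cases n with
    | zero => exact ⟨a, .nil, by simp, rfl, by simp⟩
    | succ m =>
      obtain ⟨x, Q, hQ, hlen, hsub⟩ := ih hP.of_cons m (by simpa using hn)
      refine ⟨x, .cons h Q, ?_, by simp [hlen], ?_⟩
      · rw [SimpleGraph.Walk.cons_isPath_iff]
        exact ⟨hQ, fun hmem => (((SimpleGraph.Walk.cons_isPath_iff _ _).mp hP).2 (hsub a hmem))⟩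
      · intro v hv
        rw [SimpleGraph.Walk.support_cons] at hv ⊢
        simp only [List.mem_cons] at hv ⊢
        rcases hv with hv | hv
        · exact Or.inl hv
        · exact Or.inr (hsub v hv)

lemma key_lemma (k l : ℕ) (hk : 0 < k) (hl : 0 < l) (G : SimpleGraph V)
    (hcard : k < Fintype.card V)
    (hexp : ∀ A : Finset V, A.card = k →
      l ≤ (Finset.univ.filter (fun v : V => v ∉ A ∧ ∃ a ∈ A, G.Adj v a)).card) :
    ∀ a b : ℕ, ∀ (S : Finset V) (w u : V) (P : G.Walk w u), P.IsPath →
      (∀ x ∈ S, x ∉ P.support) →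
      (∀ s ∈ S, ∀ t, G.Adj s t → t ∈ S ∨ t ∈ P.support) →
      S.card + 1 ≤ k → k - S.card ≤ a → Fintype.card V - P.length ≤ b →
      ∃ (u' w' : V) (Q : G.Walk u' w'), Q.IsPath ∧ Q.length = l := by
  intro a
  induction a with
  | zero =>
    intro b S w u P hP hd hcl hS ha hb
    omega
  | succ a iha =>
    intro b
    induction b with
    | zero =>
      intro S w u P hP hd hcl hS ha hb
      have := hP.length_lt
      omega
    | succ b ihb =>
      intro S w u P hP hd hcl hS ha hb
      by_cases hstop : S.card + 1 = k
      · -- stopping case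
        have hwS : w ∉ S := fun h => hd w h P.start_mem_support
        set A : Finset V := insert w S with hA
        have hAcard : A.card = k := by rw [Finset.card_insert_of_notMem hwS]; omega
        have hneigh := hexp A hAcard
        by_cases hext : ∃ x, G.Adj x w ∧ x ∉ S ∧ x ∉ P.support
        · -- can extend: recurse via ihb
          obtain ⟨x, hadj, hxS, hxP⟩ := hext
          refine ihb S x u (.cons hadj P) ?_ ?_ ?_ hS ha ?_
          · exact (SimpleGraph.Walk.cons_isPath_iff _ _).mpr ⟨hP, hxP⟩
          · intro y hy
            rw [SimpleGraph.Walk.support_cons, List.mem_cons]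
            rintro (rfl | hy')
            · exact hxS hy
            · exact hd y hy hy'
          · intro s hs t hadj'
            rcases hcl s hs t hadj' with h | h
            · exact Or.inl h
            · exact Or.inr (by rw [SimpleGraph.Walk.support_cons, List.mem_cons]; exact Or.inr h)
          · simp only [SimpleGraph.Walk.length_cons]; omega
        · push_neg at hext
          -- every neighbor of A outside A is in P.support \ {w}
          have hsub : (Finset.univ.filter (fun v : V => v ∉ A ∧ ∃ a ∈ A, G.Adj v a)) ⊆
              P.support.toFinset.erase w := by
            intro v hv
            simp only [Finset.mem_filter] at hv
            obtain ⟨-, hvA, av, havA, hadj⟩ := hv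
            have hvw : v ≠ w := fun h => hvA (h ▸ Finset.mem_insert_self _ _)
            have hvS : v ∉ S := fun h => hvA (Finset.mem_insert_of_mem h)
            have hvP : v ∈ P.support := by
              rcases Finset.mem_insert.mp havA with rfl | haS
              · exact hext v hadj hvS
              · rcases hcl av haS v hadj.symm with h | h
                · exact absurd h hvS
                · exact h
            exact Finset.mem_erase.mpr ⟨hvw, List.mem_toFinset.mpr hvP⟩
          have hcardsub := Finset.card_le_card hsub
          have hwsupp : w ∈ P.support.toFinset := List.mem_toFinset.mpr P.start_mem_support
          have h1 : (P.support.toFinset.erase w).card = P.support.toFinset.card - 1 :=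
            Finset.card_erase_of_mem hwsupp
          have h2 : P.support.toFinset.card = P.support.length :=
            List.toFinset_card_of_nodup hP.support_nodup
          have h3 : P.support.length = P.length + 1 := SimpleGraph.Walk.length_support P
          have hlen : l ≤ P.length := by omega
          obtain ⟨x, Q, hQ, hQlen, -⟩ := take_path' P hP l hlen
          exact ⟨w, x, Q, hQ, hQlen⟩
      · -- |S| + 1 < k : pop or extend
        by_cases hext : ∃ x, G.Adj x w ∧ x ∉ S ∧ x ∉ P.support
        · obtain ⟨x, hadj, hxS, hxP⟩ := hext
          refine ihb S x u (.cons hadj P) ?_ ?_ ?_ hS ha ?_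
          · exact (SimpleGraph.Walk.cons_isPath_iff _ _).mpr ⟨hP, hxP⟩
          · intro y hy
            rw [SimpleGraph.Walk.support_cons, List.mem_cons]
            rintro (rfl | hy')
            · exact hxS hy
            · exact hd y hy hy'
          · intro s hs t hadj'
            rcases hcl s hs t hadj' with h | h
            · exact Or.inl h
            · exact Or.inr (by rw [SimpleGraph.Walk.support_cons, List.mem_cons]; exact Or.inr h)
          · simp only [SimpleGraph.Walk.length_cons]; omega
        · push_neg at hext
          have hwS : w ∉ S := fun h => hd w h P.start_mem_support
          have hcardS : (insert w S).card = S.card + 1 :=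
            Finset.card_insert_of_notMem hwS
          cases P with
          | nil =>
            -- pop the only vertex, restart at a fresh vertex
            have hlt : (insert w S).card < Fintype.card V := by
              rw [hcardS]; omega
            obtain ⟨x, hx⟩ : ∃ x, x ∉ insert w S := by
              by_contra hall
              push_neg at hall
              have : (Finset.univ : Finset V) ⊆ insert w S := fun y _ => hall y
              have := Finset.card_le_card this
              rw [Finset.card_univ] at this
              omega
            refine iha (Fintype.card V) (insert w S) x x .nil (by simp) ?_ ?_ ?_ ?_ ?_
            · intro y hy
              simp only [SimpleGraph.Walk.support_nil, List.mem_singleton]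
              rintro rfl
              exact hx hy
            · intro s hs t hadj'
              rcases Finset.mem_insert.mp hs with rfl | hsS
              · by_cases htS : t ∈ S
                · exact Or.inl (Finset.mem_insert_of_mem htS)
                · have h := hext t hadj'.symm htS
                  simp only [SimpleGraph.Walk.support_nil, List.mem_singleton] at h
                  exact Or.inl (h ▸ Finset.mem_insert_self _ _)
              · rcases hcl s hsS t hadj' with h | h
                · exact Or.inl (Finset.mem_insert_of_mem h)
                · simp only [SimpleGraph.Walk.support_nil, List.mem_singleton] at h
                  exact Or.inl (h ▸ Finset.mem_insert_self _ _)
            · rw [hcardS]; omega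
            · rw [hcardS]; omega
            · simp
          | @cons _ w' _ hadj Q =>
            -- pop w, continue with Q
            have hwQ : w ∉ Q.support := ((SimpleGraph.Walk.cons_isPath_iff _ _).mp hP).2
            refine iha (Fintype.card V) (insert w S) w' u Q hP.of_cons ?_ ?_ ?_ ?_ ?_
            · intro y hy
              rcases Finset.mem_insert.mp hy with rfl | hyS
              · exact hwQ
              · intro hyQ
                exact hd y hyS (by rw [SimpleGraph.Walk.support_cons, List.mem_cons]; exact Or.inr hyQ)
            · intro s hs t hadj'
              rcases Finset.mem_insert.mp hs with rfl | hsS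
              · by_cases htS : t ∈ S
                · exact Or.inl (Finset.mem_insert_of_mem htS)
                · have h := hext t hadj'.symm htS
                  rw [SimpleGraph.Walk.support_cons, List.mem_cons] at h
                  rcases h with rfl | h
                  · exact Or.inl (Finset.mem_insert_self _ _)
                  · exact Or.inr h
              · rcases hcl s hsS t hadj' with h | h
                · exact Or.inl (Finset.mem_insert_of_mem h)
                · rw [SimpleGraph.Walk.support_cons, List.mem_cons] at h
                  rcases h with rfl | h
                  · exact Or.inl (Finset.mem_insert_self _ _)
                  · exact Or.inr h
            · rw [hcardS]; omega
            · rw [hcardS]; omega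
            · omega

theorem path_from_neighborhood_expansion {V : Type} [Fintype V] [DecidableEq V]
    (k l : ℕ) (hk : 0 < k) (hl : 0 < l) (G : SimpleGraph V)
    (hcard : k < Fintype.card V)
    (hexp : ∀ A : Finset V, A.card = k →
      l ≤ (Finset.univ.filter (fun v : V => v ∉ A ∧ ∃ a ∈ A, G.Adj v a)).card) :
    ∃ (u w : V) (P : G.Walk u w), P.IsPath ∧ P.length = l := by
  have : Nonempty V := Fintype.card_pos_iff.mp (by omega)
  obtain ⟨v⟩ := this
  obtain ⟨u', w', Q, hQ, hQl⟩ :=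
    key_lemma k l hk hl G hcard hexp k (Fintype.card V) ∅ v v .nil (by simp)
      (by simp) (by simp) (by simp; omega) (by simp) (by simp)
  exact ⟨u', w', Q, hQ, hQl⟩


end Percolation

end
end
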